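/- arXiv:2510.00727 — 6 statements merged into one kernel-verified Lean document; each statement's English description precedes it below -/
import Mathlib

section
/- For any prime p and any integer n ≥ 2, if p satisfies n/2 + 1 ≤ p ≤ n, then the p-adic valuation of the harmonic number H_n = ∑_{k=1}^{n} 1/k equals −1. -/
theorem padicValRat_harmonic (p n : ℕ) (hp : p.Prime) (hn : 2 ≤ n)
    (h1 : (n : ℚ) / 2 + 1 ≤ p) (h2 : (p : ℚ) ≤ n) :
    padicValRat p (∑ k ∈ Finset.Icc 1 n, (1 : ℚ) / k) = -1 := by
  haveI : Fact p.Prime := ⟨hp⟩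
  have hpn : p ≤ n := by exact_mod_cast h2
  have h2p : n < 2 * p := by
    have : (n : ℚ) < 2 * p := by linarith
    exact_mod_cast this
  have hpmem : p ∈ Finset.Icc 1 n := Finset.mem_Icc.mpr ⟨hp.one_lt.le, hpn⟩
  set F : ℕ → ℚ := fun i => if i = 0 then 1 else 1 / i with hF
  have hFpos : ∀ i, 0 < F i := by
    intro i
    rcases Nat.eq_zero_or_pos i with rfl | hi
    · simp [hF]
    · simp only [hF, Nat.pos_iff_ne_zero.mp hi, if_neg (Nat.pos_iff_ne_zero.mp hi)]
      positivity
  have hagree : ∀ k ∈ Finset.Icc 1 n, (1 : ℚ) / k = F k := by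
    intro k hk
    have : k ≠ 0 := by
      have := (Finset.mem_Icc.mp hk).1; omega
    simp [hF, this]
  rw [Finset.sum_congr rfl hagree, ← Finset.add_sum_erase _ F hpmem]
  have hFp : padicValRat p (F p) = -1 := by
    have hp0 : p ≠ 0 := hp.ne_zero
    simp only [hF, if_neg hp0, one_div]
    rw [padicValRat.inv, padicValRat.of_nat, padicValNat.self hp.one_lt]
    norm_num
  have hrest : ∀ i ∈ (Finset.Icc 1 n).erase p, padicValRat p (F p) < padicValRat p (F i) := by
    intro i hi
    rw [hFp]
    have hine : i ≠ p := (Finset.mem_erase.mp hi).1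
    have hmem := (Finset.mem_erase.mp hi).2
    have hi1 : 1 ≤ i := (Finset.mem_Icc.mp hmem).1
    have hin : i ≤ n := (Finset.mem_Icc.mp hmem).2
    have hnd : ¬ p ∣ i := by
      intro hdvd
      rcases hdvd with ⟨c, rfl⟩
      have hc : c < 2 := by
        by_contra hcon
        push_neg at hcon
        have : 2 * p ≤ p * c := by nlinarith
        omega
      interval_cases c <;> omega
    have hi0 : i ≠ 0 := by omega
    simp only [hF, if_neg hi0, one_div]
    rw [padicValRat.inv, padicValRat.of_nat]
    rw [padicValNat.eq_zero_of_not_dvd hnd]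
    norm_num
  have hne : (Finset.Icc 1 n).erase p |>.Nonempty := by
    refine ⟨1, Finset.mem_erase.mpr ⟨?_, Finset.mem_Icc.mpr ⟨le_refl 1, by omega⟩⟩⟩
    omega
  have hlt : padicValRat p (F p) < padicValRat p (∑ i ∈ (Finset.Icc 1 n).erase p, F i) :=
    padicValRat.lt_sum_of_lt hne hrest hFpos
  have hsumne : ∑ i ∈ (Finset.Icc 1 n).erase p, F i ≠ 0 :=
    (Finset.sum_pos (fun i _ => hFpos i) hne).ne'
  have htotne : F p + ∑ i ∈ (Finset.Icc 1 n).erase p, F i ≠ 0 := by positivity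
  rw [padicValRat.add_eq_of_lt htotne (hFpos p).ne' hsumne hlt, hFp]
end

section
/- For all integers m ≥ 2 and n ≥ 2m, the rational number (4/3)·∑_{k=m+1}^{n} 1/k is not an integer. -/
theorem four_thirds_sum_not_integer (m n : ℕ) (hm : 2 ≤ m) (hn : 2 * m ≤ n) :
    ¬ ∃ z : ℤ, (4 / 3 : ℚ) * (∑ k ∈ Finset.Icc (m + 1) n, (1 : ℚ) / k) = z := by
  rcases lt_or_ge n 8 with h8 | h8
  · -- small cases: m ∈ {2,3}, n ≤ 7
    rintro ⟨z, hz⟩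
    have hm3 : m ≤ 3 := by omega
    interval_cases m
    · interval_cases n
      · rw [show Finset.Icc (2+1) 4 = ({3,4} : Finset ℕ) by decide] at hz
        norm_num at hz
        have h : (315 * z : ℤ) = 245 := by
          have : (315 : ℚ) * z = 245 := by rw [← hz]; norm_num
          exact_mod_cast this
        omega
      · rw [show Finset.Icc (2+1) 5 = ({3,4,5} : Finset ℕ) by decide] at hz
        norm_num at hz
        have h : (315 * z : ℤ) = 329 := by
          have : (315 : ℚ) * z = 329 := by rw [← hz]; norm_num
          exact_mod_cast this
        omega
      · rw [show Finset.Icc (2+1) 6 = ({3,4,5,6} : Finset ℕ) by decide] at hz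
        norm_num at hz
        have h : (315 * z : ℤ) = 399 := by
          have : (315 : ℚ) * z = 399 := by rw [← hz]; norm_num
          exact_mod_cast this
        omega
      · rw [show Finset.Icc (2+1) 7 = ({3,4,5,6,7} : Finset ℕ) by decide] at hz
        norm_num at hz
        have h : (315 * z : ℤ) = 459 := by
          have : (315 : ℚ) * z = 459 := by rw [← hz]; norm_num
          exact_mod_cast this
        omega
    · interval_cases n
      · rw [show Finset.Icc (3+1) 6 = ({4,5,6} : Finset ℕ) by decide] at hz
        norm_num at hz
        have h : (315 * z : ℤ) = 259 := by
          have : (315 : ℚ) * z = 259 := by rw [← hz]; norm_num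
          exact_mod_cast this
        omega
      · rw [show Finset.Icc (3+1) 7 = ({4,5,6,7} : Finset ℕ) by decide] at hz
        norm_num at hz
        have h : (315 * z : ℤ) = 319 := by
          have : (315 : ℚ) * z = 319 := by rw [← hz]; norm_num
          exact_mod_cast this
        omega
  · -- main case: n ≥ 8, use 2-adic valuations
    rintro ⟨z, hz⟩
    haveI : Fact (Nat.Prime 2) := ⟨Nat.prime_two⟩
    set v := Nat.log 2 n with hv
    have hn0 : n ≠ 0 := by omega
    have hv3 : 3 ≤ v := (Nat.le_log_iff_pow_le one_lt_two hn0).mpr (by norm_num; omega)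
    have hjn : 2 ^ v ≤ n := Nat.pow_log_le_self 2 hn0
    have hnlt : n < 2 ^ (v + 1) := Nat.lt_pow_succ_log_self one_lt_two n
    have hpow : 2 ^ (v + 1) = 2 * 2 ^ v := by rw [pow_succ]; ring
    have hmj : m < 2 ^ v := by omega
    set F : ℕ → ℚ := fun k => if k = 0 then 1 else 1 / k with hF
    have hFpos : ∀ i, 0 < F i := by
      intro i
      simp only [hF]
      split
      · norm_num
      · rename_i h
        have : (0 : ℚ) < i := by exact_mod_cast Nat.pos_of_ne_zero h
        positivity
    have hFval : ∀ k : ℕ, k ≠ 0 → padicValRat 2 (F k) = -(padicValNat 2 k : ℤ) := by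
      intro k hk
      simp only [hF, if_neg hk, one_div]
      rw [padicValRat.inv, padicValRat.of_nat]
    have key : ∀ k ∈ Finset.Icc (m + 1) n, k ≠ 2 ^ v → padicValNat 2 k < v := by
      intro k hk hkj
      rw [Finset.mem_Icc] at hk
      by_contra hle
      push_neg at hle
      have hk0 : k ≠ 0 := by omega
      have hdvd : 2 ^ v ∣ k := (padicValNat_dvd_iff_le hk0).mpr hle
      obtain ⟨c, rfl⟩ := hdvd
      have hpv : 0 < 2 ^ v := pow_pos (by norm_num : (0:ℕ) < 2) v
      have hc2 : 2 ^ v * c < 2 ^ v * 2 := by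
        calc 2 ^ v * c ≤ n := hk.2
          _ < 2 ^ (v + 1) := hnlt
          _ = 2 ^ v * 2 := by rw [pow_succ]
      have hc2' : c < 2 := Nat.lt_of_mul_lt_mul_left hc2
      have hc1 : c ≠ 0 := by
        rintro rfl
        simp at hk
      have : c = 1 := by omega
      subst this
      simp at hkj
    have hjmem : 2 ^ v ∈ Finset.Icc (m + 1) n := Finset.mem_Icc.mpr ⟨by omega, hjn⟩
    have hsum : ∑ k ∈ Finset.Icc (m + 1) n, (1 : ℚ) / k
        = ∑ k ∈ Finset.Icc (m + 1) n, F k := by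
      refine Finset.sum_congr rfl fun k hk => ?_
      rw [Finset.mem_Icc] at hk
      simp only [hF, if_neg (show k ≠ 0 by omega)]
    have hsplit : F (2 ^ v) + ∑ k ∈ (Finset.Icc (m + 1) n).erase (2 ^ v), F k
        = ∑ k ∈ Finset.Icc (m + 1) n, F k := Finset.add_sum_erase _ F hjmem
    have hne : ((Finset.Icc (m + 1) n).erase (2 ^ v)).Nonempty := by
      rw [← Finset.card_pos, Finset.card_erase_of_mem hjmem, Nat.card_Icc]
      omega
    have hFjval : padicValRat 2 (F (2 ^ v)) = -(v : ℤ) := by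
      rw [hFval _ (pow_pos (by norm_num : (0:ℕ) < 2) v).ne', padicValNat.prime_pow]
    have hlt : padicValRat 2 (F (2 ^ v))
        < padicValRat 2 (∑ k ∈ (Finset.Icc (m + 1) n).erase (2 ^ v), F k) := by
      refine padicValRat.lt_sum_of_lt hne (fun i hi => ?_) hFpos
      rw [Finset.mem_erase] at hi
      have hi0 : i ≠ 0 := by
        have := Finset.mem_Icc.mp hi.2
        omega
      rw [hFjval, hFval i hi0]
      have := key i hi.2 hi.1
      omega
    have hErPos : 0 < ∑ k ∈ (Finset.Icc (m + 1) n).erase (2 ^ v), F k :=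
      Finset.sum_pos (fun i _ => hFpos i) hne
    have htot : padicValRat 2 (∑ k ∈ Finset.Icc (m + 1) n, F k) = -(v : ℤ) := by
      rw [← hsplit, padicValRat.add_eq_of_lt (by positivity) (hFpos _).ne' hErPos.ne' hlt,
        hFjval]
    have hSpos : 0 < ∑ k ∈ Finset.Icc (m + 1) n, F k := by
      rw [← hsplit]; positivity
    rw [hsum] at hz
    have hz0 : z ≠ 0 := by
      rintro rfl
      rw [Int.cast_zero] at hz
      have : (0:ℚ) < (4/3 : ℚ) * ∑ k ∈ Finset.Icc (m + 1) n, F k := by positivity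
      rw [hz] at this
      exact lt_irrefl 0 this
    have h43 : padicValRat 2 (4 / 3 : ℚ) = 2 := by
      rw [show (4 / 3 : ℚ) = ((4 : ℕ) : ℚ) / ((3 : ℕ) : ℚ) by norm_num,
        padicValRat.div (by norm_num) (by norm_num), padicValRat.of_nat, padicValRat.of_nat,
        show (4 : ℕ) = 2 ^ 2 from rfl, padicValNat.prime_pow,
        padicValNat.eq_zero_of_not_dvd (by decide)]
      norm_num
    have hvl : padicValRat 2 ((4 / 3 : ℚ) * ∑ k ∈ Finset.Icc (m + 1) n, F k)
        = 2 + -(v : ℤ) := by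
      rw [padicValRat.mul (by norm_num) hSpos.ne', h43, htot]
    have hvr : padicValRat 2 ((z : ℚ)) = (padicValInt 2 z : ℤ) := padicValRat.of_int
    rw [hz, hvr] at hvl
    omega
end

section
/- For all integers n > m ≥ 2, the rational number Δ_m = (4/3)·∑_{k=m+1}^{n} 1/k is never an even positive integer (equivalently, Δ_m ≠ 2k for all k ∈ ℕ⁺). -/
/-- Between two distinct numbers with the same 2-adic valuation `V` there is a
number with strictly larger 2-adic valuation. -/
lemma mid_high_val {a b V : ℕ} (ha : 0 < a) (hab : a < b)
    (hva : padicValNat 2 a = V) (hvb : padicValNat 2 b = V) :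
    ∃ c, a < c ∧ c ≤ b ∧ V < padicValNat 2 c := by
  have hb : 0 < b := ha.trans hab
  have hdva : (2:ℕ) ^ V ∣ a := hva ▸ pow_padicValNat_dvd
  have hdvb : (2:ℕ) ^ V ∣ b := hvb ▸ pow_padicValNat_dvd
  obtain ⟨a', rfl⟩ := hdva
  obtain ⟨b', rfl⟩ := hdvb
  have h2 : (0:ℕ) < 2 ^ V := pow_pos (by norm_num) V
  have hab' : a' < b' := lt_of_mul_lt_mul_left hab (Nat.zero_le _)
  have ha' : ¬ 2 ∣ a' := by
    intro hd
    have : (2:ℕ) ^ (V+1) ∣ 2 ^ V * a' := by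
      obtain ⟨t, rfl⟩ := hd
      rw [pow_succ]
      exact ⟨t, by ring⟩
    exact pow_succ_padicValNat_not_dvd (p := 2) (show 2 ^ V * a' ≠ 0 by positivity)
      (by rw [hva]; exact this)
  refine ⟨2 ^ V * (a' + 1), by nlinarith, Nat.mul_le_mul_left _ (by omega), ?_⟩
  have hdvd : (2:ℕ) ^ (V+1) ∣ 2 ^ V * (a' + 1) := by
    have : 2 ∣ a' + 1 := by omega
    obtain ⟨t, ht⟩ := this
    rw [pow_succ, ht]
    exact ⟨t, by ring⟩
  have hne : 2 ^ V * (a' + 1) ≠ 0 := by positivity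
  have := (padicValNat_dvd_iff_le (p := 2) hne).mp hdvd
  omega

lemma val_one_div (j : ℕ) (hj : 0 < j) :
    padicValRat 2 ((1:ℚ)/j) = -(padicValNat 2 j) := by
  rw [one_div, padicValRat.inv, padicValRat.of_nat]

theorem delta_not_even_integer (m n : ℕ) (hm : 2 ≤ m) (hmn : m < n) :
    ∀ k : ℕ, 0 < k →
      (4 / 3 : ℚ) * (∑ j ∈ Finset.Icc (m + 1) n, (1 : ℚ) / j) ≠ 2 * k := by
  intro k hk heq
  set I := Finset.Icc (m + 1) n with hI
  set S : ℚ := ∑ j ∈ I, (1 : ℚ) / j with hS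
  have hSval : S = 3 * k / 2 := by
    field_simp at heq
    linarith
  have hmem : ∀ j ∈ I, 3 ≤ j ∧ j ≤ n := by
    intro j hj
    simp only [hI, Finset.mem_Icc] at hj
    omega
  by_cases h4 : ∃ j ∈ I, 4 ∣ j
  · -- there is a multiple of 4; use 2-adic valuations
    have hne : I.Nonempty := ⟨m + 1, by simp [hI]; omega⟩
    obtain ⟨j0, hj0I, hj0max⟩ := I.exists_max_image (padicValNat 2) hne
    set V := padicValNat 2 j0 with hV
    have hV2 : 2 ≤ V := by
      obtain ⟨j, hjI, hjd⟩ := h4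
      have hj3 := (hmem j hjI).1
      have : 2 ≤ padicValNat 2 j :=
        (padicValNat_dvd_iff_le (p := 2) (by omega)).mp (by simpa using hjd)
      exact le_trans this (hj0max j hjI)
    -- every other element has strictly smaller valuation
    have hstrict : ∀ i ∈ I, i ≠ j0 → padicValNat 2 i < V := by
      intro i hiI hine
      rcases lt_or_eq_of_le (hj0max i hiI) with h | h
      · exact h
      exfalso
      have hi3 := (hmem i hiI).1
      have hj03 := (hmem j0 hj0I).1
      rcases Nat.lt_or_ge i j0 with hlt | hge
      · obtain ⟨c, hc1, hc2, hc3⟩ := mid_high_val (a := i) (b := j0) (by omega) hlt h rfl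
        have hcI : c ∈ I := by
          simp only [hI, Finset.mem_Icc] at hiI hj0I ⊢
          omega
        exact absurd (hj0max c hcI) (by omega)
      · have hlt : j0 < i := lt_of_le_of_ne hge (by omega)
        obtain ⟨c, hc1, hc2, hc3⟩ := mid_high_val (a := j0) (b := i) (by omega) hlt rfl h
        have hcI : c ∈ I := by
          simp only [hI, Finset.mem_Icc] at hiI hj0I ⊢
          omega
        exact absurd (hj0max c hcI) (by omega)
    -- the 2-adic valuation of S is -V
    set F : ℕ → ℚ := fun i => if i = 0 then 1 else 1 / i with hF
    have hFpos : ∀ i, 0 < F i := by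
      intro i
      simp only [hF]
      split
      · norm_num
      · positivity
    have hFeq : ∀ i ∈ I, F i = 1 / i := by
      intro i hiI
      have := (hmem i hiI).1
      simp [hF]; omega
    have hSeq : S = ∑ i ∈ I, F i := Finset.sum_congr rfl (fun i hi => (hFeq i hi).symm)
    have hvj0 : padicValRat 2 (F j0) = -(V : ℤ) := by
      rw [hFeq j0 hj0I, val_one_div j0 (by have := (hmem j0 hj0I).1; omega)]
    have hvS : padicValRat 2 S = -(V : ℤ) := by
      rcases Finset.eq_empty_or_nonempty (I.erase j0) with hE | hE
      · have : I = {j0} := by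
          rcases (Finset.erase_eq_empty_iff I j0).mp hE with h | h
          · exact absurd h (Finset.Nonempty.ne_empty hne)
          · exact h
        rw [hSeq, this, Finset.sum_singleton, hvj0]
      · have hrest : padicValRat 2 (F j0) < padicValRat 2 (∑ i ∈ I.erase j0, F i) := by
          apply padicValRat.lt_sum_of_lt hE _ hFpos
          intro i hi
          have hiI := Finset.mem_of_mem_erase hi
          have hine := Finset.ne_of_mem_erase hi
          rw [hvj0, hFeq i hiI, val_one_div i (by have := (hmem i hiI).1; omega)]
          have := hstrict i hiI hine
          omega
        have hsplit : S = F j0 + ∑ i ∈ I.erase j0, F i := by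
          rw [hSeq, Finset.add_sum_erase _ _ hj0I]
        have hrest0 : (∑ i ∈ I.erase j0, F i) ≠ 0 :=
          ne_of_gt (Finset.sum_pos (fun i _ => hFpos i) hE)
        have hFj00 : F j0 ≠ 0 := ne_of_gt (hFpos j0)
        have hS0 : F j0 + ∑ i ∈ I.erase j0, F i ≠ 0 :=
          ne_of_gt (add_pos (hFpos j0) (Finset.sum_pos (fun i _ => hFpos i) hE))
        rw [hsplit, padicValRat.add_eq_of_lt hS0 hFj00 hrest0 hrest, hvj0]
    -- but the valuation of 3k/2 is ≥ -1
    have hvRHS : (-1 : ℤ) ≤ padicValRat 2 S := by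
      rw [hSval]
      have h3k : ((3 * k : ℕ) : ℚ) ≠ 0 := by positivity
      have : (3 : ℚ) * k / 2 = ((3 * k : ℕ) : ℚ) / ((2 : ℕ) : ℚ) := by push_cast; ring
      rw [this, padicValRat.div h3k (by norm_num), padicValRat.of_nat, padicValRat.of_nat]
      have : (0 : ℤ) ≤ padicValNat 2 (3 * k) := Int.ofNat_nonneg _
      have h2 : padicValNat 2 2 = 1 := padicValNat.self (by norm_num)
      omega
    rw [hvS] at hvRHS
    omega
  · -- no multiple of 4: the interval is short and the sum is too small
    have hn3 : n ≤ m + 3 := by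
      by_contra hbig
      push_neg at hbig
      apply h4
      refine ⟨4 * ((m + 4) / 4), ?_, ⟨(m + 4) / 4, rfl⟩⟩
      simp only [hI, Finset.mem_Icc]
      omega
    have hcard : I.card ≤ 3 := by
      simp only [hI, Nat.card_Icc]
      omega
    have hbound : S ≤ 1 := by
      have h1 : S ≤ I.card • ((1 : ℚ) / 3) := by
        apply Finset.sum_le_card_nsmul
        intro j hj
        have hj3 := (hmem j hj).1
        have : (3 : ℚ) ≤ j := by exact_mod_cast hj3
        rw [div_le_div_iff₀ (by positivity) (by norm_num)]
        linarith
      calc S ≤ I.card • ((1:ℚ)/3) := h1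
        _ ≤ 3 • ((1:ℚ)/3) := by
            apply nsmul_le_nsmul_left (by norm_num) hcard
        _ = 1 := by norm_num
    have : (3 : ℚ) / 2 ≤ S := by
      rw [hSval]
      have : (1 : ℚ) ≤ k := by exact_mod_cast hk
      linarith
    linarith
end

section
/- For all integers n > m ≥ 1, the rational number (2/3)·∑_{k=2m+1}^{2n} 1/k is never a positive even integer. -/
open Finset

private lemma padicValNat_lt_of_ne {t c d : ℕ} (hc : padicValNat 2 c = t)
    (hd : padicValNat 2 d = t) (hcd : c < d) (hc0 : c ≠ 0)
    (hmax : ∀ j, c ≤ j → j ≤ d → padicValNat 2 j ≤ t) : False := by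
  have h2c : 2 ^ t ∣ c := hc ▸ pow_padicValNat_dvd
  have h2d : 2 ^ t ∣ d := hd ▸ pow_padicValNat_dvd
  have hdc : 2 ^ t ∣ d - c := Nat.dvd_sub h2d h2c
  have hle : c + 2 ^ t ≤ d := by
    have := Nat.le_of_dvd (by omega) hdc
    omega
  -- c + 2^t is divisible by 2^(t+1)
  obtain ⟨u, hu⟩ := h2c
  have hnot : ¬ 2 ^ (t + 1) ∣ c := hc ▸ pow_succ_padicValNat_not_dvd hc0
  have hu_odd : ¬ 2 ∣ u := by
    intro ⟨v, hv⟩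
    exact hnot ⟨v, by rw [hu, hv]; ring⟩
  have hdvd : 2 ^ (t + 1) ∣ c + 2 ^ t := by
    obtain ⟨w, hw⟩ : 2 ∣ u + 1 := by omega
    refine ⟨w, ?_⟩
    rw [hu, pow_succ]
    nlinarith [hw]
  have hval : t + 1 ≤ padicValNat 2 (c + 2 ^ t) :=
    (padicValNat_dvd_iff_le (p := 2) (by positivity)).1 hdvd
  have := hmax (c + 2 ^ t) (by omega) (by omega)
  omega

theorem deltaT_not_even_integer (m n : ℕ) (hm : 1 ≤ m) (hmn : m < n) :
    ∀ k : ℕ, 0 < k →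
      (2 / 3 : ℚ) * (∑ j ∈ Finset.Icc (2 * m + 1) (2 * n), (1 : ℚ) / j) ≠ 2 * k := by
  intro k hk heq
  -- reduce to sum = 3k
  have hsum : (∑ j ∈ Finset.Icc (2 * m + 1) (2 * n), (1 : ℚ) / j) = 3 * k := by
    field_simp at heq
    linarith
  set S := Finset.Icc (2 * m + 1) (2 * n) with hS
  -- positive function, defined everywhere
  set F : ℕ → ℚ := fun j => if j = 0 then 1 else 1 / j with hF
  have hFpos : ∀ i : ℕ, 0 < F i := by
    intro i
    simp only [hF]
    split
    · norm_num
    · positivity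
  have hFeq : ∀ j ∈ S, F j = 1 / j := by
    intro j hj
    simp only [Finset.mem_Icc, hS] at hj
    simp only [hF]
    rw [if_neg (by omega)]
  have hSsum : (∑ j ∈ S, F j) = 3 * k := by
    rw [Finset.sum_congr rfl hFeq, hsum]
  -- choose element of maximal 2-adic valuation
  have hSne : S.Nonempty := ⟨2 * n, by simp [hS, Finset.mem_Icc]; omega⟩
  obtain ⟨j₀, hj₀S, hj₀max⟩ := S.exists_max_image (padicValNat 2) hSne
  set t := padicValNat 2 j₀ with ht
  have hj₀mem : 2 * m + 1 ≤ j₀ ∧ j₀ ≤ 2 * n := Finset.mem_Icc.1 hj₀S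
  have hj₀ne : j₀ ≠ 0 := by omega
  -- t ≥ 1 since 2n is in the interval
  have h2n : (2 : ℕ) * n ∈ S := by simp [hS, Finset.mem_Icc]; omega
  have ht1 : 1 ≤ t := by
    have h1 : 1 ≤ padicValNat 2 (2 * n) :=
      one_le_padicValNat_of_dvd (by omega) ⟨n, rfl⟩
    exact le_trans h1 (hj₀max _ h2n)
  -- strict maximality: all other elements have smaller valuation
  have hstrict : ∀ j ∈ S.erase j₀, padicValNat 2 j < t := by
    intro j hj
    obtain ⟨hne, hjS⟩ := Finset.mem_erase.1 hj
    have hle : padicValNat 2 j ≤ t := hj₀max _ hjS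
    rcases lt_or_eq_of_le hle with h | h
    · exact h
    · exfalso
      have hjmem := Finset.mem_Icc.1 hjS
      have hmax' : ∀ i, min j j₀ ≤ i → i ≤ max j j₀ → padicValNat 2 i ≤ t := by
        intro i h1 h2
        refine hj₀max _ (Finset.mem_Icc.2 ⟨?_, ?_⟩) <;> omega
      rcases lt_or_gt_of_ne hne with hlt | hgt
      · exact padicValNat_lt_of_ne h (ht.symm) hlt (by omega)
          (by simpa [min_eq_left hlt.le, max_eq_right hlt.le] using hmax')
      · exact padicValNat_lt_of_ne (ht.symm) h hgt hj₀ne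
          (by simpa [min_eq_right hgt.le, max_eq_left hgt.le] using hmax')
  -- 2-adic valuation of terms
  have hvalF : ∀ j : ℕ, j ≠ 0 → padicValRat 2 (F j) = -(padicValNat 2 j : ℤ) := by
    intro j hj
    simp only [hF, if_neg hj, one_div]
    rw [padicValRat.inv, padicValRat.of_nat]
  -- sum over the rest has valuation > -t
  have herase_ne : (S.erase j₀).Nonempty := by
    have hcard : 2 ≤ S.card := by
      rw [hS, Nat.card_Icc]; omega
    have := Finset.card_erase_of_mem hj₀S
    rw [← Finset.card_pos, this]
    omega
  have hRgt : padicValRat 2 (F j₀) < padicValRat 2 (∑ i ∈ S.erase j₀, F i) := by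
    refine padicValRat.lt_sum_of_lt herase_ne ?_ hFpos
    intro i hi
    have hiS := (Finset.mem_erase.1 hi).2
    have hine : i ≠ 0 := by
      have := Finset.mem_Icc.1 hiS; omega
    rw [hvalF _ hj₀ne, hvalF _ hine]
    have := hstrict _ hi
    omega
  -- valuation of total sum equals valuation of F j₀, which is -t < 0
  have hsplit : (∑ j ∈ S, F j) = F j₀ + ∑ i ∈ S.erase j₀, F i :=
    (Finset.add_sum_erase S F hj₀S).symm
  have hRpos : 0 < ∑ i ∈ S.erase j₀, F i :=
    Finset.sum_pos (fun i _ => hFpos i) herase_ne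
  have htot_ne : F j₀ + ∑ i ∈ S.erase j₀, F i ≠ 0 := by positivity
  have hval_tot : padicValRat 2 (∑ j ∈ S, F j) = padicValRat 2 (F j₀) := by
    rw [hsplit]
    exact padicValRat.add_eq_of_lt htot_ne (ne_of_gt (hFpos j₀)) (ne_of_gt hRpos) hRgt
  -- but sum is a positive natural number 3k, with valuation ≥ 0
  have hval_nat : 0 ≤ padicValRat 2 (∑ j ∈ S, F j) := by
    rw [hSsum]
    have : ((3 * k : ℕ) : ℚ) = 3 * (k : ℚ) := by push_cast; ring
    rw [← this, padicValRat.of_nat]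
    positivity
  rw [hval_tot, hvalF _ hj₀ne] at hval_nat
  omega
end

section
/- For all integers m ≥ 2 and 1 ≤ x < m, the quantity J_m(x) = 2·∑_{k=m+1}^{m+x} 1/k + 2(−1)^{m+x}/((m+x+2)(m+x+1)(m+x)) − 2(−1)^m/((m+2)(m+1)m) satisfies J_m(x) < 2 log 2. -/
lemma log_step (n : ℝ) (hn : 1 ≤ n) : 1/(n+1) ≤ Real.log (n+1) - Real.log n := by
  have hn0 : 0 < n := by linarith
  have h1 : Real.log (n / (n+1)) ≤ n/(n+1) - 1 := Real.log_le_sub_one_of_pos (by positivity)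
  rw [Real.log_div (ne_of_gt hn0) (by linarith)] at h1
  have h2 : n/(n+1) - 1 = -(1/(n+1)) := by field_simp; ring
  linarith

lemma sum_le_log (m : ℕ) (hm : 1 ≤ m) (x : ℕ) :
    ∑ k ∈ Finset.Icc (m+1) (m+x), (1:ℝ)/k ≤ Real.log (m+x) - Real.log m := by
  induction x with
  | zero => simp
  | succ x ih =>
    rw [show m + (x+1) = (m+x) + 1 from rfl, Finset.sum_Icc_succ_top (by omega)]
    have key := log_step ((m:ℝ)+x) (by
      have h1 : (1:ℝ) ≤ (m:ℝ) := by exact_mod_cast hm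
      have h2 : (0:ℝ) ≤ (x:ℝ) := by positivity
      linarith)
    push_cast
    push_cast at ih key
    have h3 : ((m:ℝ) + (x + 1)) = (m:ℝ) + x + 1 := by ring
    rw [h3]
    linarith

lemma neg_one_pow_bds (n : ℕ) : (-1:ℝ) ≤ (-1:ℝ)^n ∧ (-1:ℝ)^n ≤ 1 := by
  rcases Nat.even_or_odd n with h | h
  · rw [h.neg_one_pow]; norm_num
  · rw [h.neg_one_pow]; norm_num

theorem J_lt_two_log_two (m x : ℕ) (hm : 2 ≤ m) (hx1 : 1 ≤ x) (hxm : x < m) :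
    2 * (∑ k ∈ Finset.Icc (m + 1) (m + x), (1 : ℝ) / k)
      + 2 * (-1 : ℝ) ^ (m + x) / ((m + x + 2) * (m + x + 1) * (m + x))
      - 2 * (-1 : ℝ) ^ m / ((m + 2) * (m + 1) * m) < 2 * Real.log 2 := by
  have hm1 : (1:ℝ) ≤ m := by exact_mod_cast (by omega : 1 ≤ m)
  have hmR : (2:ℝ) ≤ m := by exact_mod_cast hm
  have hxR : (1:ℝ) ≤ x := by exact_mod_cast hx1
  have hxmR : (x:ℝ) ≤ (m:ℝ) - 1 := by
    have : (x:ℝ) + 1 ≤ m := by exact_mod_cast hxm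
    linarith
  have hsum := sum_le_log m (by omega) x
  push_cast at hsum
  have hlog1 : Real.log ((m:ℝ)+x) ≤ Real.log (2*m - 1) :=
    Real.log_le_log (by linarith) (by linarith)
  have hlog2 : Real.log (2*(m:ℝ) - 1) - Real.log m ≤ Real.log 2 - 1/(2*m) := by
    have h1 : Real.log ((2*(m:ℝ)-1) / (2*m)) ≤ (2*(m:ℝ)-1)/(2*m) - 1 :=
      Real.log_le_sub_one_of_pos (div_pos (by linarith) (by linarith))
    rw [Real.log_div (by linarith) (by positivity), Real.log_mul (by norm_num) (by linarith)] at h1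
    have h2 : (2*(m:ℝ)-1)/(2*m) - 1 = -(1/(2*m)) := by field_simp; ring
    linarith
  set P1 : ℝ := ((m:ℝ) + x + 2) * ((m:ℝ) + x + 1) * ((m:ℝ) + x) with hP1
  set P2 : ℝ := ((m:ℝ) + 2) * ((m:ℝ) + 1) * (m:ℝ) with hP2
  have hP2pos : 0 < P2 := by rw [hP2]; positivity
  have hP1pos : 0 < P1 := by
    rw [hP1]
    have h0 : (0:ℝ) < (m:ℝ) + x := by linarith
    have h1 : (0:ℝ) < (m:ℝ) + x + 1 := by linarith
    have h2 : (0:ℝ) < (m:ℝ) + x + 2 := by linarith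
    exact mul_pos (mul_pos h2 h1) h0
  have hP12 : P2 ≤ P1 := by
    rw [hP1, hP2]
    gcongr <;> linarith
  have hA : 2 * (-1 : ℝ) ^ (m + x) / P1 ≤ 2 / P2 := by
    calc 2 * (-1 : ℝ) ^ (m + x) / P1 ≤ 2 / P1 := by
          gcongr
          · nlinarith [(neg_one_pow_bds (m+x)).2]
      _ ≤ 2 / P2 := by gcongr
  have hB : -(2 * (-1 : ℝ) ^ m / P2) ≤ 2 / P2 := by
    rw [neg_div']
    gcongr
    · nlinarith [(neg_one_pow_bds m).1]
  have hfin : 4 / P2 < 1 / m := by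
    rw [div_lt_div_iff₀ hP2pos (by linarith), hP2]
    nlinarith [hmR, mul_nonneg (mul_nonneg (by linarith : (0:ℝ) ≤ (m:ℝ)) (by linarith : (0:ℝ) ≤ (m:ℝ)-2)) (by linarith : (0:ℝ) ≤ (m:ℝ))]
  have hi : 1/(2*(m:ℝ)) = 1/2 * (1/m) := by rw [one_div, mul_inv]; ring
  clear_value P1 P2
  simp only [div_eq_mul_inv, mul_inv] at hsum hlog2 hA hB hfin hi ⊢
  linarith
end

section
/- For all integers m ≥ 3 and 1 ≤ x < m, the quantity L_m(x) = 2·∑_{k=m−1}^{m+x−2} 1/k + 2(−1)^{m+x−1}/((m+x)(m+x−1)) − 2(−1)^{m−1}/(m(m−1)) satisfies L_m(x) ≤ 2 log 2 + 3/2. -/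
lemma one_div_le_log_sub (k : ℕ) (hk : 2 ≤ k) :
    (1:ℝ)/k ≤ Real.log k - Real.log (k - 1) := by
  have hk1 : (0:ℝ) < (k:ℝ) - 1 := by
    have : (2:ℝ) ≤ k := by exact_mod_cast hk
    linarith
  have hk0 : (0:ℝ) < k := by linarith
  have h := Real.log_le_sub_one_of_pos (show (0:ℝ) < ((k:ℝ)-1)/k by positivity)
  rw [Real.log_div (by linarith) (by linarith)] at h
  have h2 : ((k:ℝ)-1)/k - 1 = -(1/k) := by field_simp; ring
  linarith [h2 ▸ h]

lemma sum_one_div_le (a : ℕ) (ha : 1 ≤ a) (n : ℕ) :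
    ∑ k ∈ Finset.Icc (a+1) (a+n), (1:ℝ)/k ≤ Real.log (a+n) - Real.log a := by
  induction n with
  | zero => simp
  | succ n ih =>
    rw [show a + (n+1) = (a+n) + 1 from rfl,
        Finset.sum_Icc_succ_top (by omega)]
    have h2 : (2:ℕ) ≤ a + n + 1 := by omega
    have h := one_div_le_log_sub (a+n+1) h2
    have hc : ((a+n+1 : ℕ) : ℝ) - 1 = ((a+n : ℕ) : ℝ) := by push_cast; ring
    rw [hc] at h
    push_cast at h ih ⊢
    have hr : (a:ℝ) + (↑n + 1) = ↑a + ↑n + 1 := by ring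
    rw [hr]
    linarith

lemma neg_one_pow_le_one (n : ℕ) : (-1:ℝ)^n ≤ 1 := by
  rcases Nat.even_or_odd n with h | h
  · rw [h.neg_one_pow]
  · rw [h.neg_one_pow]; norm_num

lemma neg_one_le_neg_one_pow (n : ℕ) : (-1:ℝ) ≤ (-1:ℝ)^n := by
  rcases Nat.even_or_odd n with h | h
  · rw [h.neg_one_pow]; norm_num
  · rw [h.neg_one_pow]

theorem L_le_two_log_two_add (m x : ℕ) (hm : 3 ≤ m) (hx1 : 1 ≤ x) (hxm : x < m) :
    2 * (∑ k ∈ Finset.Icc (m - 1) (m + x - 2), (1 : ℝ) / k)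
      + 2 * (-1 : ℝ) ^ (m + x - 1) / ((m + x) * (m + x - 1))
      - 2 * (-1 : ℝ) ^ (m - 1) / (m * (m - 1)) ≤ 2 * Real.log 2 + 3 / 2 := by
  obtain ⟨b, rfl⟩ : ∃ b, m = b + 3 := ⟨m - 3, by omega⟩
  obtain ⟨y, rfl⟩ : ∃ y, x = y + 1 := ⟨x - 1, by omega⟩
  have hyb : y ≤ b + 1 := by omega
  have hIcc : Finset.Icc (b + 3 - 1) (b + 3 + (y+1) - 2)
      = insert (b+2) (Finset.Icc ((b+2)+1) ((b+2)+y)) := by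
    ext k; simp only [Finset.mem_Icc, Finset.mem_insert]; omega
  rw [hIcc, Finset.sum_insert (by simp [Finset.mem_Icc])]
  have hsum := sum_one_div_le (b+2) (by omega) y
  have hlog : Real.log (((b:ℝ)+2)+y) - Real.log ((b:ℝ)+2) ≤ Real.log 2 := by
    rw [← Real.log_div (by positivity) (by positivity)]
    apply Real.log_le_log (by positivity)
    rw [div_le_iff₀ (by positivity)]
    have : (y:ℝ) ≤ b + 1 := by exact_mod_cast hyb
    linarith
  push_cast at hsum
  have hb0 : (0:ℝ) ≤ b := by positivity
  have hy0 : (0:ℝ) ≤ y := by positivity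
  have hfirst : (1:ℝ)/((b:ℝ)+2) ≤ 1/2 := by
    rw [div_le_div_iff₀ (by positivity) (by norm_num)]; linarith
  -- sign term bounds
  set D1 : ℝ := ((b:ℝ)+3+((y:ℝ)+1)) * ((b:ℝ)+3+((y:ℝ)+1)-1) with hD1def
  have hD1 : (12:ℝ) ≤ D1 := by rw [hD1def]; nlinarith
  set D2 : ℝ := ((b:ℝ)+3) * ((b:ℝ)+3-1) with hD2def
  have hD2 : (6:ℝ) ≤ D2 := by rw [hD2def]; nlinarith
  have hs1 : 2 * (-1 : ℝ) ^ (b + 3 + (y+1) - 1) / D1 ≤ 1/6 := by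
    rw [div_le_iff₀ (by linarith)]
    have := neg_one_pow_le_one (b + 3 + (y+1) - 1)
    linarith
  have hs2 : -(1/3 : ℝ) ≤ 2 * (-1 : ℝ) ^ (b + 2) / D2 := by
    rw [le_div_iff₀ (by linarith)]
    have := neg_one_le_neg_one_pow (b + 2)
    nlinarith
  push_cast
  have h1 : ∑ k ∈ Finset.Icc (b+2+1) (b+2+y), (1:ℝ)/k ≤ Real.log 2 := le_trans hsum hlog
  linarith
end
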